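/- Let c = √(2·ln(10/9)). Let Δ > 0, η ∈ (0, 1], N ≥ 1, weights p_0, …, p_{N−1} ≥ 0 with Σ_j p_j = 1 and p_0 ≥ η, and energies E_0 < E_1 ≤ … ≤ E_{N−1} with E_j − E_0 ≥ Δ for all 1 ≤ j ≤ N−1. Suppose ε > 0 satisfies ε ≤ c·min(0.9·Δ/√(2·ln(9Δ/(ε·η))), 0.2·Δ), and set σ := min(0.9·Δ/√(2·ln(9Δ/(ε·η))), 0.2·Δ). Let Ẽ_0 ∈ ℝ satisfy |Ẽ_0 − E_0| ≤ σ/4, let M := ⌈σ/ε⌉ + 1, and for j ∈ {1, …, M} set x_j := Ẽ_0 − 0.25σ + (0.5σ/M)·(j − 1). Suppose h_1, …, h_M ∈ ℂ satisfy |(g_σ∗p)(x_j) − h_j| ≤ 0.1·ε·η/(√(2π)·σ³) for all j ∈ {1, …, M}. Then every index j* ∈ {1, …, M} with |h_{j*}| ≤ |h_j| for all j ∈ {1, …, M} satisfies |x_{j*} − E_0| ≤ ε. -/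

import Mathlib

/-!
Up to the factor `1 / (√(2π) σ³)`, `|g_σ(t)|` is the profile `φ(t) = t·exp(-t²/(2σ²))`, which
increases on `[0, σ]` and decreases on `[σ, ∞)`. On the grid, which lies within `σ/2` of `E₀`,
every `E_j` with `j ≥ 1` is at distance at least `0.9Δ ≥ σ`, and the choice of `σ` makes
`φ(0.9Δ) ≤ 0.1εη`; so `√(2π)σ³·|h_j|` equals `p₀ φ(|x_j - E₀|)` up to `0.2εη`. Some grid point lies
within the spacing `σ/(2M) < ε/2` of `E₀`, while a point at distance more than `ε` has
`φ ≥ φ(ε) ≥ 0.9ε` because `ε ≤ √(2 ln(10/9)) σ`; as `p₀ ≥ η`, the second cannot minimize `|h_j|`.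
-/

open Real

noncomputable def gaussDerivFilter (σ x : ℝ) : ℝ :=
  -(1 / (Real.sqrt (2 * π) * σ ^ 3)) * x * Real.exp (-(x ^ 2) / (2 * σ ^ 2))

noncomputable def gaussProfile (σ t : ℝ) : ℝ :=
  t * exp (-t ^ 2 / (2 * σ ^ 2))

lemma gaussProfile_le_self {σ t : ℝ} (ht : 0 ≤ t) : gaussProfile σ t ≤ t :=
  mul_le_of_le_one_right ht (exp_le_one_iff.2 (div_nonpos_of_nonpos_of_nonneg
    (neg_nonpos.2 (sq_nonneg t)) (by positivity)))

lemma abs_gaussDerivFilter {σ : ℝ} (hσ : 0 < σ) (t : ℝ) :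
    |gaussDerivFilter σ t| = gaussProfile σ |t| / (√(2 * π) * σ ^ 3) := by
  rw [gaussDerivFilter, gaussProfile, abs_mul, abs_mul, abs_neg, abs_of_pos (by positivity),
    abs_exp, sq_abs]
  ring

/-- Comparison through `exp u ≥ 1 + u`, applied to `u = (a² - b²) / (2σ²)`. -/
lemma gaussProfile_le_gaussProfile {σ a b : ℝ} (hσ : σ ≠ 0) (hb : 0 ≤ b)
    (h : (a - b) * (2 * σ ^ 2) ≤ b * (a ^ 2 - b ^ 2)) :
    gaussProfile σ a ≤ gaussProfile σ b := by
  set u := (a ^ 2 - b ^ 2) / (2 * σ ^ 2)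
  have hab : a ≤ b * (u + 1) := by
    have : a - b ≤ b * (a ^ 2 - b ^ 2) / (2 * σ ^ 2) := by
      rw [le_div_iff₀ (by positivity)]; exact h
    rw [mul_add, mul_one, ← mul_div_assoc]; linarith
  calc gaussProfile σ a ≤ b * exp u * exp (-a ^ 2 / (2 * σ ^ 2)) := by
        refine mul_le_mul_of_nonneg_right (hab.trans ?_) (exp_nonneg _)
        exact mul_le_mul_of_nonneg_left (add_one_le_exp u) hb
    _ = gaussProfile σ b := by
        rw [gaussProfile, mul_assoc, ← exp_add]; congr 2; simp only [u]; field_simp; ring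

lemma gaussProfile_monotoneOn {σ : ℝ} (hσ : 0 < σ) : MonotoneOn (gaussProfile σ) (Set.Icc 0 σ) := by
  rintro a ⟨ha, -⟩ b ⟨-, hb⟩ hab
  refine gaussProfile_le_gaussProfile hσ.ne' (ha.trans hab) ?_
  nlinarith [mul_nonneg (sub_nonneg.2 hab) (show 0 ≤ 2 * σ ^ 2 - b * (a + b) by nlinarith)]

lemma gaussProfile_antitoneOn {σ : ℝ} (hσ : 0 < σ) : AntitoneOn (gaussProfile σ) (Set.Ici σ) := by
  rintro a (ha : σ ≤ a) b - hab
  refine gaussProfile_le_gaussProfile hσ.ne' (hσ.le.trans ha) ?_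
  nlinarith [mul_nonneg (sub_nonneg.2 hab) (show 0 ≤ a * (a + b) - 2 * σ ^ 2 by nlinarith)]

lemma nine_tenths_mul_le_gaussProfile {σ ε : ℝ} (hε : 0 ≤ ε)
    (h : ε ≤ √(2 * log (10 / 9)) * σ) : 9 / 10 * ε ≤ gaussProfile σ ε := by
  have hlog : 0 < log (10 / 9) := log_pos (by norm_num)
  have hsq : ε ^ 2 ≤ 2 * log (10 / 9) * σ ^ 2 := by
    calc ε ^ 2 ≤ (√(2 * log (10 / 9)) * σ) ^ 2 := pow_le_pow_left₀ hε h 2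
      _ = 2 * log (10 / 9) * σ ^ 2 := by rw [mul_pow, sq_sqrt (by positivity)]
  have hexp : -log (10 / 9) ≤ -ε ^ 2 / (2 * σ ^ 2) := by
    rw [neg_div, neg_le_neg_iff]
    exact div_le_of_le_mul₀ (by positivity) hlog.le (by linarith)
  calc 9 / 10 * ε = ε * exp (-log (10 / 9)) := by
        rw [exp_neg, exp_log (by norm_num)]; norm_num; ring
    _ ≤ gaussProfile σ ε := mul_le_mul_of_nonneg_left (exp_le_exp.2 hexp) hε

lemma gaussProfile_le_of_le_div_sqrt_log {σ D s : ℝ} (hσ : 0 < σ) (hs : 0 < s)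
    (h : σ ≤ D / √(2 * log (D / s))) : gaussProfile σ D ≤ s := by
  set L := log (D / s)
  have hpos : 0 < D / √(2 * L) := hσ.trans_le h
  have hroot : 0 < √(2 * L) := by
    by_contra! h0
    rw [le_antisymm h0 (sqrt_nonneg _), div_zero] at hpos
    exact lt_irrefl 0 hpos
  have hD : 0 < D := (div_pos_iff_of_pos_right hroot).1 hpos
  have hL : 0 < L := by have := sqrt_pos.1 hroot; linarith
  have hsq : 2 * L * σ ^ 2 ≤ D ^ 2 := by
    have h' : σ * √(2 * L) ≤ D := (le_div_iff₀ hroot).1 h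
    calc 2 * L * σ ^ 2 = (σ * √(2 * L)) ^ 2 := by rw [mul_pow, sq_sqrt (by linarith)]; ring
      _ ≤ D ^ 2 := pow_le_pow_left₀ (by positivity) h' 2
  have hexp : -D ^ 2 / (2 * σ ^ 2) ≤ -L := by
    rw [neg_div, neg_le_neg_iff, le_div_iff₀ (by positivity)]; linarith
  calc gaussProfile σ D ≤ D * exp (-L) := mul_le_mul_of_nonneg_left (exp_le_exp.2 hexp) hD.le
    _ = s := by rw [exp_neg, exp_log (by positivity)]; field_simp

lemma abs_sum_mul_sub_mul_le {ι : Type*} [Fintype ι] [DecidableEq ι] {p f : ι → ℝ}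
    (hp : ∀ k, 0 ≤ p k) (hp1 : ∑ k, p k = 1) (i : ι) {B : ℝ} (hB : ∀ k ≠ i, |f k| ≤ B) :
    |∑ k, p k * f k - p i * f i| ≤ (1 - p i) * B := by
  have hrest : ∑ k ∈ Finset.univ.erase i, p k = 1 - p i := by
    rw [← hp1, ← Finset.add_sum_erase _ _ (Finset.mem_univ i)]; ring
  rw [← Finset.add_sum_erase _ _ (Finset.mem_univ i), add_sub_cancel_left, ← hrest,
    Finset.sum_mul]
  refine (Finset.abs_sum_le_sum_abs _ _).trans (Finset.sum_le_sum fun k hk => ?_)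
  rw [abs_mul, abs_of_nonneg (hp k)]
  exact mul_le_mul_of_nonneg_left (hB k (Finset.ne_of_mem_erase hk)) (hp k)

lemma abs_sum_mul_gaussDerivFilter_sub_le {ι : Type*} [Fintype ι] [DecidableEq ι]
    {p E : ι → ℝ} (hp : ∀ k, 0 ≤ p k) (hp1 : ∑ k, p k = 1) (i : ι) {σ D s y : ℝ} (hσ : 0 < σ)
    (hσD : σ ≤ D) (hDs : gaussProfile σ D ≤ s) (hfar : ∀ k ≠ i, D ≤ |y - E k|) :
    |∑ k, p k * gaussDerivFilter σ (y - E k) - p i * gaussDerivFilter σ (y - E i)| ≤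
      (1 - p i) * (s / (√(2 * π) * σ ^ 3)) := by
  refine abs_sum_mul_sub_mul_le hp hp1 i fun k hk => ?_
  rw [abs_gaussDerivFilter hσ]
  gcongr
  exact (gaussProfile_antitoneOn hσ hσD (hσD.trans (hfar k hk)) (hfar k hk)).trans hDs

lemma abs_mul_norm_sub_mul_gaussProfile_le {ι : Type*} [Fintype ι] [DecidableEq ι]
    {p E : ι → ℝ} (hp : ∀ k, 0 ≤ p k) (hp1 : ∑ k, p k = 1) (i : ι) {σ D s y : ℝ} {z : ℂ}
    (hσ : 0 < σ) (hσD : σ ≤ D) (hDs : gaussProfile σ D ≤ s) (hfar : ∀ k ≠ i, D ≤ |y - E k|)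
    (hz : ‖(↑(∑ k, p k * gaussDerivFilter σ (y - E k)) : ℂ) - z‖ ≤ s / (√(2 * π) * σ ^ 3)) :
    |√(2 * π) * σ ^ 3 * ‖z‖ - p i * gaussProfile σ (|y - E i|)| ≤ 2 * s := by
  set K := √(2 * π) * σ ^ 3 with hKdef
  have hK : 0 < K := by positivity
  have hs : 0 ≤ s := (mul_nonneg (hσ.le.trans hσD) (exp_nonneg _)).trans hDs
  have hconv := abs_sum_mul_gaussDerivFilter_sub_le hp hp1 i hσ hσD hDs hfar
  have hobs := abs_norm_sub_norm_le ((∑ k, p k * gaussDerivFilter σ (y - E k) : ℝ) : ℂ) z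
  rw [Complex.norm_real, Real.norm_eq_abs] at hobs
  have hcentre := abs_abs_sub_abs_le_abs_sub (∑ k, p k * gaussDerivFilter σ (y - E k))
    (p i * gaussDerivFilter σ (y - E i))
  rw [abs_mul, abs_of_nonneg (hp i), abs_gaussDerivFilter hσ, ← hKdef] at hcentre
  have hweight : (1 - p i) * (s / K) ≤ s / K :=
    mul_le_of_le_one_left (by positivity) (by linarith [hp i])
  have hscaled : |‖z‖ - p i * (gaussProfile σ |y - E i| / K)| ≤ 2 * (s / K) := by
    rw [abs_le]
    constructor <;> linarith [abs_le.1 (hobs.trans hz), abs_le.1 hcentre, abs_le.1 hconv]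
  calc _ = K * |‖z‖ - p i * (gaussProfile σ |y - E i| / K)| := by
        rw [← abs_of_pos hK, ← abs_mul, abs_of_pos hK]; congr 1; field_simp
    _ ≤ K * (2 * (s / K)) := by gcongr
    _ = 2 * s := by field_simp

lemma abs_add_div_mul_sub_le {a w e : ℝ} {M : ℕ} (hw : 0 ≤ w) (he : e ∈ Set.Icc a (a + w))
    (j : Fin M) : |a + w / M * j - e| ≤ w := by
  have hj : w / M * j ≤ w := by
    rw [div_mul_eq_mul_div, div_le_iff₀ (by exact_mod_cast j.pos)]
    exact mul_le_mul_of_nonneg_left (by exact_mod_cast j.isLt.le) hw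
  rw [abs_le]; constructor <;> nlinarith [he.1, he.2, show 0 ≤ w / M * j by positivity]

lemma exists_abs_add_div_mul_sub_le {a w e : ℝ} {M : ℕ} (hM : 0 < M) (hw : 0 < w)
    (he : e ∈ Set.Icc a (a + w)) : ∃ j : Fin M, |a + w / M * j - e| ≤ w / M := by
  have hδ : 0 < w / M := by positivity
  set t := (e - a) / (w / M)
  have ht0 : 0 ≤ t := div_nonneg (by linarith [he.1]) hδ.le
  have htM : t ≤ M := by
    rw [div_le_iff₀ hδ, mul_div_cancel₀ _ (by positivity : (M : ℝ) ≠ 0)]; linarith [he.2]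
  refine ⟨⟨min ⌊t⌋₊ (M - 1), by omega⟩, ?_⟩
  have hkt : ((min ⌊t⌋₊ (M - 1) : ℕ) : ℝ) ≤ t :=
    (Nat.cast_le.2 (min_le_left _ _)).trans (Nat.floor_le ht0)
  have htk : t ≤ ((min ⌊t⌋₊ (M - 1) : ℕ) : ℝ) + 1 := by
    rcases le_total ⌊t⌋₊ (M - 1) with hle | hle
    · rw [min_eq_left hle]; exact (Nat.lt_floor_add_one t).le
    · rw [min_eq_right hle, Nat.cast_sub hM]; push_cast; linarith
  have hsplit : a + w / M * ((min ⌊t⌋₊ (M - 1) : ℕ) : ℝ) - e =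
      w / M * (((min ⌊t⌋₊ (M - 1) : ℕ) : ℝ) - t) := by
    simp only [t]; field_simp; ring
  rw [hsplit, abs_mul, abs_of_pos hδ]
  exact mul_le_of_le_one_right hδ.le (abs_le.2 ⟨by linarith, by linarith⟩)

/-- The index `j : Fin M` stands for the grid index `j + 1 ∈ {1, …, M}`. -/
theorem gaussDerivConv_grid_minimizer_general (Δ η : ℝ) (hη0 : 0 < η)
    (N : ℕ) (hN : 1 ≤ N) (p E : Fin N → ℝ)
    (hp_nonneg : ∀ j, 0 ≤ p j) (hp_sum : ∑ j, p j = 1) (hp0 : η ≤ p ⟨0, hN⟩)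
    (hE_gap : ∀ j : Fin N, 1 ≤ j.val → Δ ≤ E j - E ⟨0, hN⟩)
    (ε : ℝ) (hε : 0 < ε)
    (hε_small : ε ≤ Real.sqrt (2 * Real.log (10 / 9)) *
      min (0.9 * Δ / Real.sqrt (2 * Real.log (9 * Δ / (ε * η)))) (0.2 * Δ))
    (σ : ℝ)
    (hσ : σ = min (0.9 * Δ / Real.sqrt (2 * Real.log (9 * Δ / (ε * η)))) (0.2 * Δ))
    (Etilde : ℝ) (hEtilde : |Etilde - E ⟨0, hN⟩| ≤ σ / 4)
    (M : ℕ) (hM : M = ⌈σ / ε⌉₊ + 1)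
    (x : Fin M → ℝ) (hx : ∀ j : Fin M, x j = Etilde - 0.25 * σ + (0.5 * σ / M) * j.val)
    (h : Fin M → ℂ)
    (hh : ∀ j : Fin M,
      ‖(↑(∑ k, p k * gaussDerivFilter σ (x j - E k)) : ℂ) - h j‖ ≤
        0.1 * ε * η / (Real.sqrt (2 * π) * σ ^ 3)) :
    ∀ jstar : Fin M, (∀ j : Fin M, ‖h jstar‖ ≤ ‖h j‖) →
      |x jstar - E ⟨0, hN⟩| ≤ ε := by
  intro jstar hmin
  set i₀ : Fin N := ⟨0, hN⟩
  rw [← hσ] at hε_small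
  have hσ0 : 0 < σ := pos_of_mul_pos_right (hε.trans_le hε_small) (sqrt_nonneg _)
  have hσΔ : σ ≤ 0.2 * Δ := hσ ▸ min_le_right _ _
  have hE₀ : E i₀ ∈ Set.Icc (Etilde - 0.25 * σ) (Etilde - 0.25 * σ + 0.5 * σ) := by
    constructor <;> linarith [abs_le.1 hEtilde]
  have hnear (j : Fin M) : |x j - E i₀| ≤ 0.5 * σ :=
    hx j ▸ abs_add_div_mul_sub_le (by positivity) hE₀ j
  have htail : gaussProfile σ (0.9 * Δ) ≤ 0.1 * ε * η := by
    refine gaussProfile_le_of_le_div_sqrt_log hσ0 (by positivity) ?_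
    rw [show 0.9 * Δ / (0.1 * ε * η) = 9 * Δ / (ε * η) by ring]
    exact hσ ▸ min_le_left _ _
  have happrox (j : Fin M) :=
    abs_mul_norm_sub_mul_gaussProfile_le (E := E) (y := x j) hp_nonneg hp_sum i₀ hσ0
      (by linarith) htail (fun k hk => by
        have := hE_gap k (Nat.one_le_iff_ne_zero.2 fun h0 => hk (Fin.ext h0))
        linarith [neg_le_abs (x j - E k), abs_le.1 (hnear j)])
      (hh j)
  obtain ⟨j₀, hj₀⟩ := exists_abs_add_div_mul_sub_le (M := M) (by omega) (by positivity) hE₀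
  rw [← hx] at hj₀
  by_contra! hfar
  have hlow : 0.9 * ε ≤ gaussProfile σ |x jstar - E i₀| :=
    (nine_tenths_mul_le_gaussProfile hε.le hε_small).trans' (by norm_num) |>.trans
      (gaussProfile_monotoneOn hσ0 ⟨hε.le, by linarith [hnear jstar]⟩
        ⟨abs_nonneg _, by linarith [hnear jstar]⟩ hfar.le)
  have hup : gaussProfile σ |x j₀ - E i₀| < 0.5 * ε := by
    have hceil : σ < ε * M := by
      rw [← div_lt_iff₀' hε, hM]; push_cast; linarith [Nat.le_ceil (σ / ε)]
    refine (gaussProfile_le_self (abs_nonneg _)).trans_lt (hj₀.trans_lt ?_)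
    rw [div_lt_iff₀ (by rw [hM]; positivity)]; linarith
  have hK : 0 < √(2 * π) * σ ^ 3 := by positivity
  have hp₀ : 0 < p i₀ := hη0.trans_le hp0
  nlinarith [abs_le.1 (happrox jstar), abs_le.1 (happrox j₀),
    mul_le_mul_of_nonneg_left (hmin j₀) hK.le, mul_le_mul_of_nonneg_left hlow hp₀.le,
    mul_lt_mul_of_pos_left hup hp₀, mul_le_mul_of_nonneg_right hp0 hε.le]

/-- Correctness of the grid-minimization step: given a coarse estimate `Etilde` of `E₀`
(within `σ/4`) and estimates `h_j` of the convolution `(g_σ∗p)` on the grid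
`x_j = Etilde − 0.25σ + (0.5σ/M)(j−1)` that are accurate within `0.1·ε·η/(√(2π)σ³)`,
any grid point minimizing `|h_j|` is `ε`-close to `E₀`.  (Here the index `j : Fin M`
represents `j − 1 ∈ {0, …, M−1}` for `j ∈ {1, …, M}`.) -/
theorem gaussDerivConv_grid_minimizer (Δ η : ℝ) (hΔ : 0 < Δ) (hη0 : 0 < η) (hη1 : η ≤ 1)
    (N : ℕ) (hN : 1 ≤ N) (p E : Fin N → ℝ)
    (hp_nonneg : ∀ j, 0 ≤ p j) (hp_sum : ∑ j, p j = 1) (hp0 : η ≤ p ⟨0, hN⟩)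
    (hE_lt : ∀ j : Fin N, 1 ≤ j.val → E ⟨0, hN⟩ < E j)
    (hE_chain : ∀ i j : Fin N, 1 ≤ i.val → i ≤ j → E i ≤ E j)
    (hE_gap : ∀ j : Fin N, 1 ≤ j.val → Δ ≤ E j - E ⟨0, hN⟩)
    (ε : ℝ) (hε : 0 < ε)
    (hε_small : ε ≤ Real.sqrt (2 * Real.log (10 / 9)) *
      min (0.9 * Δ / Real.sqrt (2 * Real.log (9 * Δ / (ε * η)))) (0.2 * Δ))
    (σ : ℝ)
    (hσ : σ = min (0.9 * Δ / Real.sqrt (2 * Real.log (9 * Δ / (ε * η)))) (0.2 * Δ))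
    (Etilde : ℝ) (hEtilde : |Etilde - E ⟨0, hN⟩| ≤ σ / 4)
    (M : ℕ) (hM : M = ⌈σ / ε⌉₊ + 1)
    (x : Fin M → ℝ) (hx : ∀ j : Fin M, x j = Etilde - 0.25 * σ + (0.5 * σ / M) * j.val)
    (h : Fin M → ℂ)
    (hh : ∀ j : Fin M,
      ‖(↑(∑ k, p k * gaussDerivFilter σ (x j - E k)) : ℂ) - h j‖ ≤
        0.1 * ε * η / (Real.sqrt (2 * π) * σ ^ 3)) :
    ∀ jstar : Fin M, (∀ j : Fin M, ‖h jstar‖ ≤ ‖h j‖) →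
      |x jstar - E ⟨0, hN⟩| ≤ ε :=
  gaussDerivConv_grid_minimizer_general Δ η hη0 N hN p E hp_nonneg hp_sum hp0 hE_gap ε hε hε_small σ
    hσ Etilde hEtilde M hM x hx h hh
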